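/- For every n ≥ 1, the number of planar binary trees with n leaves whose internal nodes are labeled by elements of the four-element set {↘, ↗, ↖, ↙}, subject to the restriction that a left-growth pattern (p, q) is allowed if and only if p ≠ ↖, q ≠ ↘, and p ≠ q (so the allowed left-growth patterns are exactly (↙,↖), (↙,↗), (↗,↙), (↗,↖), (↘,↙), (↘,↖), (↘,↗)), equals d_n = (1/n)·∑_{j=n}^{2n−1} binom(3n, n+1+j)·binom(j−1, j−n). (These labeled trees are the normal monomials for the Gröbner–Shirshov basis of the nonsymmetric quadri-algebra operad, and d_n is the dimension of the multilinear component of degree n of the free quadri-algebra on one generator.) -/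

import Mathlib

/-!
Let `F` count normal trees by leaves and `C p` those whose root is labeled `p`. Splitting a tree
at its root gives `C p = (X + ∑_{(p, q) allowed} C q) * F` and `F = X + ∑ p, C p`. In these
equations `↗` and `↙` play symmetric roles, so `C ↗ = C ↙`, and eliminating the `C p` leaves
`F (1 - F) = X (1 + F)^3`, that is `F = X φ(F)` with `φ(u) = (1 + u)^3 / (1 - u)`. Lagrange
inversion gives `n [X^n] F = [u^(n-1)] φ(u)^n = ∑_k binom(n-1+k, k) binom(3n, n-1-k)`, which is
the stated sum after reindexing.
-/

/-- Operation labels `↘` (se), `↗` (ne), `↖` (nw), `↙` (sw). -/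
inductive QuadOp where
  | se
  | ne
  | nw
  | sw
deriving DecidableEq

/-- Planar (full) binary trees with internal nodes labeled by `L` and unlabeled leaves. -/
inductive PBTree (L : Type) where
  | leaf : PBTree L
  | node : L → PBTree L → PBTree L → PBTree L

/-- Number of leaves of a planar binary tree. -/
def PBTree.leaves {L : Type} : PBTree L → ℕ
  | .leaf => 1
  | .node _ l r => l.leaves + r.leaves

/-- Normality for the quadri-algebra operad: a left-growth pattern `(p, q)` is allowed
iff `p ≠ ↖`, `q ≠ ↘` and `p ≠ q`. -/
def PBTree.normalQuad : PBTree QuadOp → Prop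
  | .leaf => True
  | .node _ .leaf r => r.normalQuad
  | .node p (.node q a b) r =>
      p ≠ QuadOp.nw ∧ q ≠ QuadOp.se ∧ p ≠ q ∧
        (PBTree.node q a b).normalQuad ∧ r.normalQuad

deriving instance DecidableEq for PBTree

open Finset

namespace PBTree

variable {L : Type}

def height : PBTree L → ℕ
  | leaf => 0
  | node _ l r => max l.height r.height + 1

theorem height_lt_leaves : ∀ t : PBTree L, t.height < t.leaves
  | leaf => Nat.zero_lt_one
  | node _ l r => by
    have := l.height_lt_leaves
    have := r.height_lt_leaves
    simp only [height, leaves]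
    omega

def root? : PBTree L → Option L
  | leaf => none
  | node p _ _ => some p

theorem root?_eq_none {t : PBTree L} : t.root? = none ↔ t = leaf := by
  cases t <;> simp [root?]

theorem ncard_setOf_root?_eq_none (P : PBTree L → Prop) (hP : P leaf) (n : ℕ) :
    {t : PBTree L | t.leaves = n ∧ P t ∧ t.root? = none}.ncard = if n = 1 then 1 else 0 := by
  have h : {t : PBTree L | t.leaves = n ∧ P t ∧ t.root? = none} = {t | t = leaf ∧ n = 1} := by
    ext t
    simp only [Set.mem_ofPred, root?_eq_none]
    constructor
    · rintro ⟨rfl, -, rfl⟩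
      exact ⟨rfl, rfl⟩
    · rintro ⟨rfl, rfl⟩
      exact ⟨rfl, hP, rfl⟩
  rw [h]
  split_ifs with hn <;> simp [hn]

section Finite

variable [Fintype L] [DecidableEq L]

def ofHeightLE : ℕ → Finset (PBTree L)
  | 0 => {leaf}
  | k + 1 => insert leaf ((univ ×ˢ ofHeightLE k ×ˢ ofHeightLE k).image
      fun x => node x.1 x.2.1 x.2.2)

theorem mem_ofHeightLE {k : ℕ} {t : PBTree L} : t ∈ ofHeightLE k ↔ t.height ≤ k := by
  induction k generalizing t with
  | zero => cases t <;> simp [ofHeightLE, height]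
  | succ k ih => cases t <;> simp [ofHeightLE, height, ih]

def ofLeaves (n : ℕ) : Finset (PBTree L) := (ofHeightLE n).filter (·.leaves = n)

theorem mem_ofLeaves {n : ℕ} {t : PBTree L} : t ∈ ofLeaves n ↔ t.leaves = n := by
  simp only [ofLeaves, mem_filter, mem_ofHeightLE, and_iff_right_iff_imp]
  rintro rfl
  exact t.height_lt_leaves.le

theorem ncard_setOf_leaves_eq_card (P : PBTree L → Prop) [DecidablePred P] (n : ℕ) :
    {t : PBTree L | t.leaves = n ∧ P t}.ncard = ((ofLeaves n).filter P).card := by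
  rw [← Set.ncard_coe_finset]
  congr
  ext t
  simp [mem_ofLeaves]

theorem ncard_setOf_node (p : L) (P Q : PBTree L → Prop) (n : ℕ) :
    {t : PBTree L | t.leaves = n ∧ ∃ l r, t = node p l r ∧ P l ∧ Q r}.ncard =
      ∑ x ∈ antidiagonal n,
        {l : PBTree L | l.leaves = x.1 ∧ P l}.ncard *
          {r : PBTree L | r.leaves = x.2 ∧ Q r}.ncard := by
  classical
  set pairs := (antidiagonal n).biUnion fun x =>
    (ofLeaves x.1).filter P ×ˢ (ofLeaves x.2).filter Q
  have hset : {t : PBTree L | t.leaves = n ∧ ∃ l r, t = node p l r ∧ P l ∧ Q r} =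
      ↑(pairs.image fun lr => node p lr.1 lr.2) := by
    ext t
    simp only [Set.mem_ofPred, coe_image, Set.mem_image, mem_coe, pairs, mem_biUnion,
      mem_product, mem_filter, mem_ofLeaves, HasAntidiagonal.mem_antidiagonal, Prod.exists]
    constructor
    · rintro ⟨rfl, l, r, rfl, hl, hr⟩
      exact ⟨l, r, ⟨l.leaves, r.leaves, rfl, ⟨rfl, hl⟩, rfl, hr⟩, rfl⟩
    · rintro ⟨l, r, ⟨i, j, rfl, ⟨hi, hl⟩, hj, hr⟩, rfl⟩
      exact ⟨by simp [leaves, hi, hj], l, r, rfl, hl, hr⟩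
  have hinj : Function.Injective fun lr : PBTree L × PBTree L => node p lr.1 lr.2 := by
    rintro ⟨l, r⟩ ⟨l', r'⟩ h
    simp_all
  rw [hset, Set.ncard_coe_finset, card_image_of_injective _ hinj, card_biUnion]
  · refine sum_congr rfl fun x _ => ?_
    rw [card_product, ncard_setOf_leaves_eq_card, ncard_setOf_leaves_eq_card]
  · intro x _ y _ hxy
    simp only [Function.onFun, disjoint_left, mem_product, mem_filter,
      mem_ofLeaves]
    rintro ⟨l, r⟩ ⟨⟨hl, -⟩, hr, -⟩ ⟨⟨hl', -⟩, hr', -⟩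
    exact hxy (Prod.ext (hl.symm.trans hl') (hr.symm.trans hr'))

theorem ncard_setOf_eq_sum_root? (P : PBTree L → Prop) (S : Option L → Prop) [DecidablePred S]
    (n : ℕ) :
    {t : PBTree L | t.leaves = n ∧ P t ∧ S t.root?}.ncard =
      ∑ o ∈ univ.filter S, {t : PBTree L | t.leaves = n ∧ P t ∧ t.root? = o}.ncard := by
  classical
  rw [ncard_setOf_leaves_eq_card, card_eq_sum_card_fiberwise (f := root?) (t := univ.filter S)
    (fun t ht => by simp_all)]
  refine sum_congr rfl fun o ho => ?_
  rw [ncard_setOf_leaves_eq_card, filter_filter]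
  refine congrArg card (filter_congr fun t _ => ?_)
  have hS : S o := (mem_filter.mp ho).2
  constructor
  · rintro ⟨⟨hP, -⟩, rfl⟩
    exact ⟨hP, rfl⟩
  · rintro ⟨hP, rfl⟩
    exact ⟨⟨hP, hS⟩, rfl⟩

end Finite

section GeneratingFunction

open PowerSeries

variable (K : Type*) [CommSemiring K]

/-- `Set.ncard` is `0` on infinite sets, so this is only meaningful for finite label types. -/
noncomputable def genFun (P : PBTree L → Prop) : K⟦X⟧ :=
  mk fun n => ({t : PBTree L | t.leaves = n ∧ P t}.ncard : K)

theorem constantCoeff_genFun (P : PBTree L → Prop) : constantCoeff (genFun K P) = 0 := by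
  have h : {t : PBTree L | t.leaves = 0 ∧ P t} = ∅ :=
    Set.eq_empty_of_forall_notMem fun t ht => Nat.not_lt_zero _ (ht.1 ▸ t.height_lt_leaves)
  rw [← coeff_zero_eq_constantCoeff_apply, genFun, coeff_mk, h, Set.ncard_empty, Nat.cast_zero]

theorem genFun_root?_eq_none (P : PBTree L → Prop) (hP : P leaf) :
    genFun K (fun t => P t ∧ t.root? = none) = X := by
  ext n
  rw [genFun, coeff_mk, ncard_setOf_root?_eq_none P hP, coeff_X]
  split_ifs <;> simp

variable [Fintype L] [DecidableEq L]

theorem genFun_eq_sum_root? (P : PBTree L → Prop) (S : Option L → Prop) [DecidablePred S] :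
    genFun K (fun t => P t ∧ S t.root?) =
      ∑ o ∈ univ.filter S, genFun K (fun t => P t ∧ t.root? = o) := by
  ext n
  simp only [genFun, coeff_mk, map_sum, ncard_setOf_eq_sum_root? P S, Nat.cast_sum]

theorem genFun_node (p : L) (P Q : PBTree L → Prop) :
    genFun K (fun t => ∃ l r, t = node p l r ∧ P l ∧ Q r) = genFun K P * genFun K Q := by
  ext n
  simp only [genFun, coeff_mk, coeff_mul, ncard_setOf_node, Nat.cast_sum, Nat.cast_mul]

end GeneratingFunction

def LeftGrowthIn (R : L → L → Prop) : PBTree L → Prop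
  | leaf => True
  | node p l r => (∀ q ∈ l.root?, R p q) ∧ l.LeftGrowthIn R ∧ r.LeftGrowthIn R

section LeftGrowth

open PowerSeries

variable (K : Type*) [CommSemiring K] (R : L → L → Prop)

noncomputable def rootGenFun (p : L) : K⟦X⟧ :=
  genFun K fun t => t.LeftGrowthIn R ∧ t.root? = some p

variable [Fintype L] [DecidableEq L]

theorem genFun_leftGrowthIn : genFun K (LeftGrowthIn R) = X + ∑ p, rootGenFun K R p := by
  have h := genFun_eq_sum_root? K (LeftGrowthIn R) (fun _ => True)
  simp only [and_true, filter_true] at h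
  rw [h, Fintype.sum_option, genFun_root?_eq_none K (LeftGrowthIn R) trivial]
  rfl

theorem rootGenFun_eq [DecidableRel R] (p : L) :
    rootGenFun K R p =
      (X + ∑ q ∈ univ.filter (R p), rootGenFun K R q) * genFun K (LeftGrowthIn R) := by
  have h : (fun t : PBTree L => t.LeftGrowthIn R ∧ t.root? = some p) =
      fun t => ∃ l r, t = node p l r ∧
        (l.LeftGrowthIn R ∧ ∀ q ∈ l.root?, R p q) ∧ r.LeftGrowthIn R := by
    ext t
    cases t with
    | leaf => simp [root?]
    | node p' l r =>
      constructor
      · rintro ⟨⟨hlr, hl, hr⟩, hp⟩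
        obtain rfl : p' = p := Option.some.inj hp
        exact ⟨l, r, rfl, ⟨hl, hlr⟩, hr⟩
      · rintro ⟨l, r, h, ⟨hl, hlr⟩, hr⟩
        obtain ⟨rfl, rfl, rfl⟩ := node.inj h
        exact ⟨⟨hlr, hl, hr⟩, rfl⟩
  rw [rootGenFun, h, genFun_node,
    genFun_eq_sum_root? K (LeftGrowthIn R) (fun o => ∀ q ∈ o, R p q), sum_filter,
    Fintype.sum_option, sum_filter, genFun_root?_eq_none K (LeftGrowthIn R) trivial]
  simp [rootGenFun]

end LeftGrowth

end PBTree

namespace PowerSeries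

section Lagrange

variable {K : Type*} [Field K] {U : K⟦X⟧}

theorem natCast_smul_derivative_X_mul_mul_inv_pow (hU : constantCoeff U ≠ 0) (k : ℕ) :
    (k : K) • (d⁄dX K (X * U) * U⁻¹ ^ (k + 1)) =
      (k : K) • U⁻¹ ^ k - X * d⁄dX K (U⁻¹ ^ k) := by
  have hUV : U * U⁻¹ = 1 := PowerSeries.mul_inv_cancel U hU
  rw [Derivation.leibniz, Derivation.leibniz_pow, derivative_inv', derivative_X]
  simp only [smul_eq_mul, nsmul_eq_mul, Nat.cast_smul_eq_nsmul]
  cases k with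
  | zero => simp
  | succ k =>
    push_cast
    linear_combination (k + 1 : K⟦X⟧) * U⁻¹ ^ (k + 1) * hUV

theorem coeff_derivative_X_mul_mul_inv_pow [CharZero K] (hU : constantCoeff U ≠ 0) (k : ℕ) :
    coeff k (d⁄dX K (X * U) * U⁻¹ ^ (k + 1)) = if k = 0 then 1 else 0 := by
  split_ifs with hk
  · subst hk
    simp [hU]
  · have h := congrArg (coeff k) (natCast_smul_derivative_X_mul_mul_inv_pow hU k)
    obtain ⟨m, rfl⟩ := Nat.exists_eq_succ_of_ne_zero hk
    rw [map_sub, coeff_succ_X_mul, coeff_derivative, coeff_smul, coeff_smul, smul_eq_mul,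
      smul_eq_mul, Nat.cast_succ, mul_comm (coeff (m + 1) _), sub_self] at h
    exact (mul_eq_zero.mp h).resolve_left (Nat.cast_add_one_ne_zero m)

/-- With `F = X * U`, this coefficient is the residue of `F' / F ^ (n + 1 - i)`, which vanishes
for `i ≠ n` because that function is then a derivative. -/
theorem coeff_derivative_X_mul_mul_inv_pow_mul_pow [CharZero K] (hU : constantCoeff U ≠ 0)
    (n i : ℕ) :
    coeff n (d⁄dX K (X * U) * U⁻¹ ^ (n + 1) * (X * U) ^ i) = if i = n then 1 else 0 := by
  rw [mul_pow, mul_left_comm, coeff_X_pow_mul']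
  by_cases hin : i ≤ n
  · obtain ⟨k, rfl⟩ := Nat.exists_eq_add_of_le hin
    have hUV : U⁻¹ ^ (i + k + 1) * U ^ i = U⁻¹ ^ (k + 1) := by
      rw [show i + k + 1 = k + 1 + i by ring, pow_add, mul_assoc, ← mul_pow,
        PowerSeries.inv_mul_cancel U hU, one_pow, mul_one]
    rw [if_pos hin, mul_assoc, hUV, Nat.add_sub_cancel_left, coeff_derivative_X_mul_mul_inv_pow hU]
    simp
  · rw [if_neg hin, if_neg (by omega)]

theorem coeff_derivative_X_mul_mul_inv_pow_mul_aeval [CharZero K] (hU : constantCoeff U ≠ 0)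
    (n : ℕ) (D : Polynomial K) :
    coeff n (d⁄dX K (X * U) * U⁻¹ ^ (n + 1) * Polynomial.aeval (X * U) D) = D.coeff n := by
  rw [Polynomial.aeval_eq_sum_range, mul_sum, map_sum]
  simp_rw [mul_smul_comm, map_smul, coeff_derivative_X_mul_mul_inv_pow_mul_pow hU, smul_eq_mul,
    mul_ite, mul_one, mul_zero]
  rw [sum_ite_eq', ite_eq_left_iff, mem_range, not_lt]
  exact fun h => (Polynomial.coeff_eq_zero_of_natDegree_lt h).symm

theorem add_one_mul_coeff_eq_of_X_pow_dvd_sub_aeval [CharZero K] (hU : constantCoeff U ≠ 0)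
    (n : ℕ) {D : Polynomial K} (hD : X ^ (n + 1) ∣ U ^ (n + 1) - Polynomial.aeval (X * U) D) :
    (n + 1) * coeff n U = D.coeff n := by
  obtain ⟨W, hW⟩ := hD
  have h : d⁄dX K (X * U) = d⁄dX K (X * U) * U⁻¹ ^ (n + 1) * Polynomial.aeval (X * U) D +
      X ^ (n + 1) * (d⁄dX K (X * U) * U⁻¹ ^ (n + 1) * W) := by
    have hUV : U ^ (n + 1) * U⁻¹ ^ (n + 1) = 1 := by
      rw [← mul_pow, PowerSeries.mul_inv_cancel U hU, one_pow]
    linear_combination (d⁄dX K (X * U) * U⁻¹ ^ (n + 1)) * hW - d⁄dX K (X * U) * hUV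
  have := congrArg (coeff n) h
  rw [map_add, coeff_X_pow_mul', if_neg (by omega), add_zero,
    coeff_derivative_X_mul_mul_inv_pow_mul_aeval hU, coeff_derivative, coeff_succ_X_mul] at this
  rw [← this, mul_comm]

theorem lagrange_inversion [CharZero K] {φ : K⟦X⟧} (hU : constantCoeff U ≠ 0)
    (h : U = φ.subst (X * U)) (n : ℕ) :
    (n + 1) * coeff n U = coeff n (φ ^ (n + 1)) := by
  have hXU : HasSubst (X * U) := HasSubst.of_constantCoeff_zero' (by simp)
  set D := trunc (n + 1) (φ ^ (n + 1))
  set S : K⟦X⟧ := mk fun i ↦ coeff (i + (n + 1)) (φ ^ (n + 1))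
  have hsplit : φ ^ (n + 1) = X ^ (n + 1) * S + (D : K⟦X⟧) := eq_X_pow_mul_shift_add_trunc _ _
  have hUpow : U ^ (n + 1) = (X * U) ^ (n + 1) * S.subst (X * U) + Polynomial.aeval (X * U) D := by
    calc U ^ (n + 1) = (φ ^ (n + 1)).subst (X * U) := by rw [subst_pow hXU, ← h]
      _ = _ := by
        rw [hsplit, subst_add hXU, subst_mul hXU, subst_pow hXU, subst_X hXU, subst_coe hXU]
  have hD : X ^ (n + 1) ∣ U ^ (n + 1) - Polynomial.aeval (X * U) D := by
    rw [hUpow, add_sub_cancel_right, mul_pow, mul_assoc]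
    exact dvd_mul_right _ _
  rw [add_one_mul_coeff_eq_of_X_pow_dvd_sub_aeval hU n hD, coeff_trunc, if_pos (Nat.lt_succ_self n)]

end Lagrange

/-- `mk 1 = (1 - X)⁻¹`, so this solves `U = φ(X * U)` for `φ = (1 + X) ^ m / (1 - X)`. -/
theorem eq_subst_one_add_X_pow_mul_mk_one {K : Type*} [CommRing K] {U : K⟦X⟧} (m : ℕ)
    (h : U * (1 - X * U) = (1 + X * U) ^ m) :
    U = ((1 + X) ^ m * mk 1 : K⟦X⟧).subst (X * U) := by
  have hXU : HasSubst (X * U) := HasSubst.of_constantCoeff_zero' (by simp)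
  have hgeom := congrArg (subst (X * U)) (mk_one_mul_one_sub_eq_one (S := K))
  rw [← coe_substAlgHom hXU, map_mul, map_sub, map_one, substAlgHom_X] at hgeom
  rw [← coe_substAlgHom hXU, map_mul, map_pow, map_add, map_one, substAlgHom_X]
  linear_combination (-U) * hgeom + substAlgHom hXU (mk 1 : K⟦X⟧) * h

theorem coeff_one_add_X_pow {K : Type*} [CommSemiring K] (n k : ℕ) :
    coeff k ((1 + X : K⟦X⟧) ^ n) = n.choose k := by
  rw [← Polynomial.coeff_one_add_X_pow K, ← Polynomial.coeff_coe]
  push_cast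
  rfl

theorem coeff_one_add_X_pow_mul_mk_one_pow {K : Type*} [CommRing K] (m N : ℕ) :
    coeff N (((1 + X) ^ m * mk 1 : K⟦X⟧) ^ (N + 1)) =
      ∑ x ∈ antidiagonal N, ((m * (N + 1)).choose x.1 * (N + x.2).choose N : ℕ) := by
  rw [mul_pow, ← pow_mul, mk_one_pow_eq_mk_choose_add, coeff_mul, Nat.cast_sum]
  refine sum_congr rfl fun x _ => ?_
  rw [coeff_mk, coeff_one_add_X_pow, Nat.cast_mul]

end PowerSeries

namespace QuadOp

instance : Fintype QuadOp :=
  ⟨{se, ne, nw, sw}, fun q => by cases q <;> simp⟩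

theorem sum_univ {M : Type*} [AddCommMonoid M] (f : QuadOp → M) :
    ∑ q, f q = f se + f ne + f nw + f sw := by
  simp [univ, Fintype.elems, add_assoc]

def LeftGrowthAllowed (p q : QuadOp) : Prop :=
  p ≠ nw ∧ q ≠ se ∧ p ≠ q

instance : DecidableRel LeftGrowthAllowed :=
  fun _ _ => inferInstanceAs (Decidable (_ ∧ _ ∧ _))

end QuadOp

namespace PBTree

open QuadOp

theorem normalQuad_iff_leftGrowthIn :
    ∀ t : PBTree QuadOp, t.normalQuad ↔ t.LeftGrowthIn LeftGrowthAllowed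
  | leaf => Iff.rfl
  | node p leaf r => by
    simp [normalQuad, LeftGrowthIn, root?, normalQuad_iff_leftGrowthIn r]
  | node p (node q a b) r => by
    rw [normalQuad, normalQuad_iff_leftGrowthIn r, normalQuad_iff_leftGrowthIn (node q a b)]
    simp [LeftGrowthIn, root?, LeftGrowthAllowed, and_assoc]

open PowerSeries

theorem genFun_normalQuad :
    genFun ℚ normalQuad * (1 - genFun ℚ normalQuad) = X * (1 + genFun ℚ normalQuad) ^ 3 := by
  have hF : genFun ℚ normalQuad = genFun ℚ (LeftGrowthIn LeftGrowthAllowed) :=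
    congrArg _ (funext fun t => propext (normalQuad_iff_leftGrowthIn t))
  have hsum := genFun_leftGrowthIn ℚ LeftGrowthAllowed
  have hC (p : QuadOp) := rootGenFun_eq ℚ LeftGrowthAllowed p
  have hse := hC se
  have hne := hC ne
  have hnw := hC nw
  have hsw := hC sw
  simp only [sum_univ, LeftGrowthAllowed, ne_eq, reduceCtorEq, not_false_eq_true, true_and,
    sum_filter, not_true_eq_false, and_self, ↓reduceIte, zero_add, and_true, and_false, add_zero,
    false_and, sum_const_zero] at hsum hse hne hnw hsw
  have hF1 : 1 + genFun ℚ (LeftGrowthIn LeftGrowthAllowed) ≠ 0 := fun h => by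
    simpa [constantCoeff_genFun] using congrArg constantCoeff h
  rw [hF]
  set F := genFun ℚ (LeftGrowthIn LeftGrowthAllowed)
  set C := rootGenFun ℚ LeftGrowthAllowed
  have hsym : C ne = C sw := by
    have h : (C ne - C sw) * (1 + F) = 0 := by linear_combination hne - hsw
    exact sub_eq_zero.mp ((mul_eq_zero.mp h).resolve_right hF1)
  linear_combination (1 - F) * (hsum + hse - (1 + F) * hsym + (1 + F) * hnw) +
    2 * (1 + F) * (hne + F * hnw - F * hsym)

theorem add_one_mul_ncard_normalQuad (N : ℕ) :
    (N + 1) * {t : PBTree QuadOp | t.leaves = N + 1 ∧ t.normalQuad}.ncard =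
      ∑ x ∈ antidiagonal N, (3 * (N + 1)).choose x.1 * (N + x.2).choose N := by
  obtain ⟨U, hFU⟩ : X ∣ genFun ℚ normalQuad := X_dvd_iff.mpr (constantCoeff_genFun ℚ _)
  have hUF : U * (1 - X * U) = (1 + X * U) ^ 3 := by
    have h := genFun_normalQuad
    rw [hFU] at h
    exact mul_left_cancel₀ X_ne_zero (by linear_combination h)
  have hU0 : constantCoeff U ≠ 0 := by
    have h : constantCoeff U = 1 := by simpa using congrArg constantCoeff hUF
    exact h ▸ one_ne_zero
  have hsubst := eq_subst_one_add_X_pow_mul_mk_one 3 hUF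
  have hcoeff : coeff N U = {t : PBTree QuadOp | t.leaves = N + 1 ∧ t.normalQuad}.ncard := by
    rw [← coeff_succ_X_mul, ← hFU, genFun, coeff_mk]
  have h := lagrange_inversion hU0 hsubst N
  rw [hcoeff, coeff_one_add_X_pow_mul_mk_one_pow] at h
  exact_mod_cast h

end PBTree

theorem sum_Icc_choose_eq_sum_antidiagonal (N : ℕ) :
    ∑ j ∈ Icc (N + 1) (2 * (N + 1) - 1),
        (3 * (N + 1)).choose (N + 1 + 1 + j) * (j - 1).choose (j - (N + 1)) =
      ∑ x ∈ antidiagonal N, (3 * (N + 1)).choose x.1 * (N + x.2).choose N := by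
  refine sum_nbij' (fun j => (2 * N + 1 - j, j - (N + 1))) (fun x => x.2 + N + 1) ?_ ?_ ?_ ?_ ?_ <;>
    intro a ha <;>
    simp only [mem_Icc, HasAntidiagonal.mem_antidiagonal, Prod.ext_iff] at ha ⊢
  iterate 4 omega
  · rw [← Nat.choose_symm (by omega : N + 1 + 1 + a ≤ 3 * (N + 1)),
      ← Nat.choose_symm (by omega : a - (N + 1) ≤ a - 1)]
    congr 2 <;> omega

/-- the number of `{↘,↗,↖,↙}`-labeled planar binary trees with `n` leaves
whose left-growth patterns `(p,q)` all satisfy `p ≠ ↖`, `q ≠ ↘`, `p ≠ q` equals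
`d_n = (1/n) ∑_{j=n}^{2n-1} binom(3n, n+1+j) binom(j-1, j-n)`. -/
theorem count_normal_quadri_trees (n : ℕ) (hn : 1 ≤ n) :
    {t : PBTree QuadOp | t.leaves = n ∧ t.normalQuad}.ncard =
      (∑ j ∈ Finset.Icc n (2 * n - 1),
        (3 * n).choose (n + 1 + j) * (j - 1).choose (j - n)) / n := by
  obtain ⟨N, rfl⟩ := Nat.exists_eq_add_of_le' hn
  rw [sum_Icc_choose_eq_sum_antidiagonal, ← PBTree.add_one_mul_ncard_normalQuad,
    Nat.mul_div_cancel_left _ N.succ_pos]
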